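/- arXiv:1806.03022 — 3 statements merged into one kernel-verified Lean document; each statement's English description precedes it below -/
import Mathlib

section
/- Let n be a positive integer and let s be a complex number such that s + j ≠ 0 for j = 1, …, n. Then for every complex number x: ∑_{k=0}^{n} C(s+n, k) · [ (∑_{j=0}^{k-1} 1/(s+n-j))^2 − ∑_{j=0}^{k-1} 1/(s+n-j)^2 ] · x^k = ∑_{k=0}^{n-1} (C(s+k, k)/(k+1)) · [ 2 · ∑_{j=1}^{k} 1/(s+j) + s · ( (∑_{j=1}^{k} 1/(s+j))^2 − ∑_{j=1}^{k} 1/(s+j)^2 ) ] · x^{k+1} · (1+x)^{n-k-1}. -/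
/-!
With `t = s + n`, the summand on the left is `∂²/∂t² C(t, k) · x ^ k`. Pascal's rule
`C(t + 1, k + 1) = C(t, k + 1) + C(t, k)` survives differentiation in `t`, so the left side
`L n` satisfies `L (n + 1) = (1 + x) · L n + x ^ (n + 1) · (∂²C(t + 1, n + 1) - ∂²C(t, n))`, and
unrolling this recursion from `L 0 = 0` gives the right side once the jump
`∂²C(t + 1, n + 1) - ∂²C(t, n)` is computed in closed form.
-/

/-- Generalized binomial coefficient `C(s,k) = s(s-1)⋯(s-k+1)/k!` for complex `s`. -/
noncomputable def genChoose (s : ℂ) (k : ℕ) : ℂ :=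
  (∏ i ∈ Finset.range k, (s - i)) / (Nat.factorial k)

/-- The `n`-th harmonic number as a complex number. -/
noncomputable def Hc (n : ℕ) : ℂ := ∑ i ∈ Finset.range n, 1 / (i + 1)

/-- The `n`-th generalized harmonic number of order 2 as a complex number. -/
noncomputable def H2c (n : ℕ) : ℂ := ∑ i ∈ Finset.range n, 1 / ((i : ℂ) + 1) ^ 2

open Finset

noncomputable def invSum (t : ℂ) (k : ℕ) : ℂ := ∑ j ∈ range k, 1 / (t - j)

noncomputable def invSqSum (t : ℂ) (k : ℕ) : ℂ := ∑ j ∈ range k, 1 / (t - j) ^ 2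

/-- The second derivative of `t ↦ genChoose t k`, obtained by logarithmic differentiation of
`∏ j < k, (t - j)`. -/
noncomputable def genChooseDeriv2 (t : ℂ) (k : ℕ) : ℂ :=
  genChoose t k * (invSum t k ^ 2 - invSqSum t k)

lemma genChoose_succ (t : ℂ) (k : ℕ) :
    genChoose t (k + 1) = genChoose t k * (t - k) / (k + 1) := by
  simp only [genChoose, prod_range_succ, Nat.factorial_succ, Nat.cast_mul]
  push_cast
  field_simp

lemma genChoose_add_one_succ (t : ℂ) (k : ℕ) :
    genChoose (t + 1) (k + 1) = (t + 1) * genChoose t k / (k + 1) := by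
  simp only [genChoose, prod_range_succ', Nat.factorial_succ, Nat.cast_mul]
  push_cast
  simp only [add_sub_add_right_eq_sub, sub_zero]
  field_simp

lemma invSum_succ (t : ℂ) (k : ℕ) : invSum t (k + 1) = invSum t k + 1 / (t - k) :=
  sum_range_succ _ _

lemma invSqSum_succ (t : ℂ) (k : ℕ) : invSqSum t (k + 1) = invSqSum t k + 1 / (t - k) ^ 2 :=
  sum_range_succ _ _

lemma invSum_add_one_succ (t : ℂ) (k : ℕ) :
    invSum (t + 1) (k + 1) = invSum t k + 1 / (t + 1) := by
  simp [invSum, sum_range_succ']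

lemma invSqSum_add_one_succ (t : ℂ) (k : ℕ) :
    invSqSum (t + 1) (k + 1) = invSqSum t k + 1 / (t + 1) ^ 2 := by
  simp [invSqSum, sum_range_succ']

lemma genChooseDeriv2_zero (t : ℂ) : genChooseDeriv2 t 0 = 0 := by
  simp [genChooseDeriv2, invSum, invSqSum]

lemma genChooseDeriv2_add_one_succ {t : ℂ} (ht : t + 1 ≠ 0) (k : ℕ) :
    genChooseDeriv2 (t + 1) (k + 1) = genChoose t k / (k + 1) *
      (2 * invSum t k + (t + 1) * (invSum t k ^ 2 - invSqSum t k)) := by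
  rw [genChooseDeriv2, genChoose_add_one_succ, invSum_add_one_succ, invSqSum_add_one_succ]
  field_simp
  ring

lemma genChooseDeriv2_add_one_succ_sub {t : ℂ} (ht : t + 1 ≠ 0) (k : ℕ) :
    genChooseDeriv2 (t + 1) (k + 1) - genChooseDeriv2 t k = genChoose t k / (k + 1) *
      (2 * invSum t k + (t - k) * (invSum t k ^ 2 - invSqSum t k)) := by
  rw [genChooseDeriv2_add_one_succ ht, genChooseDeriv2]
  field_simp
  ring

lemma genChooseDeriv2_pascal {t : ℂ} (ht : t + 1 ≠ 0) {k : ℕ} (hk : t - k ≠ 0) :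
    genChooseDeriv2 (t + 1) (k + 1) = genChooseDeriv2 t (k + 1) + genChooseDeriv2 t k := by
  rw [genChooseDeriv2_add_one_succ ht, genChooseDeriv2, genChooseDeriv2, genChoose_succ,
    invSum_succ, invSqSum_succ]
  field_simp
  ring

lemma sum_genChooseDeriv2_add_one (t x : ℂ) (n : ℕ) (ht : ∀ k ≤ n, t + 1 - k ≠ 0) :
    ∑ k ∈ range (n + 1 + 1), genChooseDeriv2 (t + 1) k * x ^ k =
      (1 + x) * ∑ k ∈ range (n + 1), genChooseDeriv2 t k * x ^ k +
        (genChooseDeriv2 (t + 1) (n + 1) - genChooseDeriv2 t n) * x ^ (n + 1) := by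
  have hpascal : ∀ k ∈ range n, genChooseDeriv2 (t + 1) (k + 1) * x ^ (k + 1) =
      genChooseDeriv2 t (k + 1) * x ^ (k + 1) + x * (genChooseDeriv2 t k * x ^ k) := by
    intro k hk
    have hshift : t + 1 - (k + 1 : ℕ) = t - k := by push_cast; ring
    rw [genChooseDeriv2_pascal (by simpa using ht 0 (Nat.zero_le n))
      (hshift ▸ ht (k + 1) (mem_range.mp hk)), pow_succ]
    ring
  have hlow := sum_range_succ' (fun k => genChooseDeriv2 t k * x ^ k) n
  have hhigh := sum_range_succ (fun k => genChooseDeriv2 t k * x ^ k) n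
  rw [sum_range_succ, sum_range_succ', sum_congr rfl hpascal, sum_add_distrib, ← mul_sum]
  simp only [genChooseDeriv2_zero, zero_mul, add_zero] at hlow ⊢
  linear_combination -hlow - x * hhigh

lemma sum_mul_pow_one_add_succ {R : Type*} [CommSemiring R] (c : ℕ → R) (x : R) (n : ℕ) :
    ∑ k ∈ range (n + 1), c k * x ^ (k + 1) * (1 + x) ^ (n + 1 - k - 1) =
      (1 + x) * ∑ k ∈ range n, c k * x ^ (k + 1) * (1 + x) ^ (n - k - 1) + c n * x ^ (n + 1) := by
  rw [sum_range_succ, mul_sum, Nat.add_sub_cancel_left, Nat.sub_self]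
  congr 1
  · refine sum_congr rfl fun k hk => ?_
    rw [show n + 1 - k - 1 = n - k - 1 + 1 by have := mem_range.mp hk; omega, pow_succ]
    ring
  · ring

lemma sum_genChooseDeriv2_eq (s x : ℂ) (n : ℕ) (hs : ∀ j ∈ Icc 1 n, s + j ≠ 0) :
    ∑ k ∈ range (n + 1), genChooseDeriv2 (s + n) k * x ^ k =
      ∑ k ∈ range n, (genChooseDeriv2 (s + k + 1) (k + 1) - genChooseDeriv2 (s + k) k) *
        x ^ (k + 1) * (1 + x) ^ (n - k - 1) := by
  induction n with
  | zero => simp [genChooseDeriv2_zero]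
  | succ n ih =>
    have ht : ∀ k ≤ n, s + n + 1 - k ≠ 0 := by
      intro k hk
      have hsk := hs (n + 1 - k) (mem_Icc.mpr ⟨by omega, by omega⟩)
      rwa [Nat.cast_sub (by omega), Nat.cast_succ, ← add_sub_assoc, ← add_assoc] at hsk
    rw [sum_mul_pow_one_add_succ, ← ih fun j hj => hs j (Icc_subset_Icc_right n.le_succ hj),
      Nat.cast_succ, ← add_assoc, sum_genChooseDeriv2_add_one _ _ _ ht]

lemma sum_range_sub_eq_sum_Icc {M : Type*} [AddCommMonoid M] (f : ℂ → M) (s : ℂ) (k : ℕ) :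
    ∑ j ∈ range k, f (s + k - j) = ∑ j ∈ Icc 1 k, f (s + j) := by
  induction k with
  | zero => simp
  | succ k ih =>
    rw [sum_range_succ', sum_Icc_succ_top (by omega), ← ih]
    congr 1
    · exact sum_congr rfl fun j _ => by push_cast; ring_nf
    · simp

theorem stmt_3_general (n : ℕ) (s : ℂ)
    (hs : ∀ j ∈ Finset.Icc 1 n, s + (j : ℂ) ≠ 0) (x : ℂ) :
    ∑ k ∈ Finset.range (n + 1), genChoose (s + n) k *
        ((∑ j ∈ Finset.range k, 1 / (s + n - j)) ^ 2 -
          ∑ j ∈ Finset.range k, 1 / (s + n - j) ^ 2) * x ^ k =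
      ∑ k ∈ Finset.range n, genChoose (s + k) k / (k + 1) *
        (2 * ∑ j ∈ Finset.Icc 1 k, 1 / (s + j) +
          s * ((∑ j ∈ Finset.Icc 1 k, 1 / (s + j)) ^ 2 -
            ∑ j ∈ Finset.Icc 1 k, 1 / (s + j) ^ 2)) *
        x ^ (k + 1) * (1 + x) ^ (n - k - 1) := by
  refine (sum_genChooseDeriv2_eq s x n hs).trans (sum_congr rfl fun k hk => ?_)
  have hsk : s + k + 1 ≠ 0 := by
    simpa [add_assoc] using hs (k + 1) (mem_Icc.mpr ⟨k.succ_pos, mem_range.mp hk⟩)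
  rw [genChooseDeriv2_add_one_succ_sub hsk, add_sub_cancel_right, invSum, invSqSum,
    sum_range_sub_eq_sum_Icc (fun z => 1 / z), sum_range_sub_eq_sum_Icc (fun z => 1 / z ^ 2)]

theorem stmt_3 (n : ℕ) (hn : 0 < n) (s : ℂ)
    (hs : ∀ j ∈ Finset.Icc 1 n, s + (j : ℂ) ≠ 0) (x : ℂ) :
    ∑ k ∈ Finset.range (n + 1), genChoose (s + n) k *
        ((∑ j ∈ Finset.range k, 1 / (s + n - j)) ^ 2 -
          ∑ j ∈ Finset.range k, 1 / (s + n - j) ^ 2) * x ^ k =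
      ∑ k ∈ Finset.range n, genChoose (s + k) k / (k + 1) *
        (2 * ∑ j ∈ Finset.Icc 1 k, 1 / (s + j) +
          s * ((∑ j ∈ Finset.Icc 1 k, 1 / (s + j)) ^ 2 -
            ∑ j ∈ Finset.Icc 1 k, 1 / (s + j) ^ 2)) *
        x ^ (k + 1) * (1 + x) ^ (n - k - 1) :=
  stmt_3_general n s hs x
end

section
/- Let n be a positive integer and let s be a complex number such that s + j ≠ 0 for j = 1, …, n. Then ∑_{k=1}^{n} C(s+n, k) · ((-1)^{k-1}/k^2) · (∑_{j=0}^{k-1} 1/(s+n-j)) = ∑_{k=0}^{n-1} ( (-1)^k/(k+1) ) · C(s+k, k) · (H_n − H_k) / ((n−k) · binom(n, k)) + s · ∑_{k=0}^{n-1} ( (-1)^k/(k+1) ) · C(s+k, k) · ( (H_n − H_k) / ((n−k) · binom(n, k)) ) · ∑_{j=1}^{k} 1/(s+j), where binom(n, k) is the ordinary binomial coefficient. -/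
/-! Both sides are values at `s` of derivatives of polynomials in `X`: the left side of
`P_n = ∑_{k=1}^n (-1)^(k-1)/k² · C(X+n, k)`, the right side of
`Q_n = ∑_{k<n} (-1)^k w(n,k) · C(X+k, k+1)` with `w(n,k) = (H_n - H_k)/((n-k) binom(n,k))`;
the inner sums are the logarithmic derivatives of the products defining `C(X+m, k)`.
The weights satisfy the Pascal-type rule `w(n,k) = w(n+1,k) + w(n+1,k+1)`, and together with
Pascal's rule for `C(X+m, k)` this makes `P_{n+1} - P_n(X+1)` and `Q_{n+1} - Q_n(X+1)` differ
by a constant. So `P_n - Q_n` is constant and the derivatives agree. -/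

open Polynomial Finset

theorem Polynomial.eval_derivative_prod_X_add_C {K ι : Type*} [Field K] (t : Finset ι)
    (f : ι → K) {s : K} (hs : ∀ i ∈ t, s + f i ≠ 0) :
    (derivative (∏ i ∈ t, (X + C (f i)))).eval s =
      (∏ i ∈ t, (s + f i)) * ∑ i ∈ t, 1 / (s + f i) := by
  classical
  induction t using Finset.induction_on with
  | empty => simp
  | insert a t ha ih =>
    rw [forall_mem_insert] at hs
    simp only [prod_insert ha, sum_insert ha, derivative_mul, eval_add, eval_mul,
      derivative_add, derivative_X, derivative_C, eval_prod, ih hs.2, eval_X, eval_C,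
      add_zero, one_mul]
    field_simp [hs.1]

noncomputable def choosePoly (m : ℂ) (k : ℕ) : ℂ[X] :=
  C (k.factorial : ℂ)⁻¹ * ∏ i ∈ range k, (X + C (m - i))

lemma eval_choosePoly (m s : ℂ) (k : ℕ) : (choosePoly m k).eval s = genChoose (s + m) k := by
  simp only [choosePoly, genChoose, eval_mul, eval_C, eval_prod, eval_add, eval_X, add_sub_assoc]
  ring

lemma eval_derivative_choosePoly (m s : ℂ) (k : ℕ) (hs : ∀ i < k, s + m - i ≠ 0) :
    (derivative (choosePoly m k)).eval s = genChoose (s + m) k * ∑ i ∈ range k, 1 / (s + m - i) := by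
  rw [choosePoly, derivative_C_mul, eval_mul, eval_C,
    eval_derivative_prod_X_add_C _ _ fun i hi => by simpa [add_sub_assoc] using hs i (mem_range.1 hi)]
  simp only [genChoose, add_sub_assoc]
  ring

lemma choosePoly_comp_X_add_one (m : ℂ) (k : ℕ) :
    (choosePoly m k).comp (X + 1) = choosePoly (m + 1) k := by
  simp only [choosePoly, mul_comp, C_comp, Polynomial.prod_comp, add_comp, X_comp]
  congr 1
  refine prod_congr rfl fun i _ => ?_
  simp only [map_add, map_sub, map_one]
  ring

lemma choosePoly_zero (m : ℂ) : choosePoly m 0 = 1 := by simp [choosePoly]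

lemma choosePoly_succ_succ (m : ℂ) (k : ℕ) :
    choosePoly (m + 1) (k + 1) = choosePoly m (k + 1) + choosePoly m k := by
  have hfac : C (k.factorial : ℂ)⁻¹ = C ((k + 1).factorial : ℂ)⁻¹ * (k + 1) := by
    rw [← map_natCast C, ← map_one C, ← map_add, ← C_mul]
    congr 1
    push_cast [Nat.factorial_succ]
    field_simp
  have hfirst : ∏ i ∈ range (k + 1), (X + C (m + 1 - i)) =
      (∏ i ∈ range k, (X + C (m - i))) * (X + C (m + 1)) := by
    rw [prod_range_succ']
    push_cast
    simp only [add_sub_add_right_eq_sub, sub_zero]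
  rw [choosePoly, choosePoly, choosePoly, hfirst, prod_range_succ, hfac]
  simp only [map_add, map_sub, map_one, map_natCast]
  ring

lemma choosePoly_succ_self (k : ℕ) :
    choosePoly k (k + 1) = C ((k : ℂ) + 1)⁻¹ * (X * choosePoly k k) := by
  rw [choosePoly, choosePoly, prod_range_succ, sub_self, map_zero, add_zero, Nat.factorial_succ]
  push_cast
  rw [mul_inv, C_mul]
  ring

lemma Hc_succ (n : ℕ) : Hc (n + 1) = Hc n + 1 / ((n : ℂ) + 1) := by
  simp [Hc, sum_range_succ]

noncomputable def harmonicWeight (n k : ℕ) : ℂ := (Hc n - Hc k) / ((n - k) * n.choose k)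

lemma harmonicWeight_eq_add {n k : ℕ} (hk : k < n) :
    harmonicWeight n k = harmonicWeight (n + 1) k + harmonicWeight (n + 1) (k + 1) := by
  have hnk : (n : ℂ) - k ≠ 0 := sub_ne_zero.2 (by exact_mod_cast hk.ne')
  have hnk' : (n : ℂ) + 1 - (k + 1) ≠ 0 := by rwa [add_sub_add_right_eq_sub]
  have hn1k : (n : ℂ) + 1 - k ≠ 0 := sub_ne_zero.2 (by exact_mod_cast (Nat.lt_succ_of_lt hk).ne')
  have hchoose : (n.choose k : ℂ) ≠ 0 := by exact_mod_cast (Nat.choose_pos hk.le).ne'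
  have h1 : ((n + 1).choose k : ℂ) = (n + 1) * n.choose k / (n + 1 - k) := by
    have := congrArg (Nat.cast : ℕ → ℂ) (Nat.choose_mul_succ_eq n k)
    push_cast [Nat.cast_sub (Nat.le_succ_of_le hk.le)] at this
    rw [eq_div_iff hn1k]
    linear_combination -this
  have h2 : ((n + 1).choose (k + 1) : ℂ) = (n + 1) * n.choose k / (k + 1) := by
    rw [eq_div_iff (Nat.cast_add_one_ne_zero k)]
    exact_mod_cast (Nat.add_one_mul_choose_eq n k).symm
  simp only [harmonicWeight, Hc_succ, h1, h2]
  push_cast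
  field_simp
  ring

lemma harmonicWeight_succ_self (n : ℕ) : harmonicWeight (n + 1) n = 1 / ((n : ℂ) + 1) ^ 2 := by
  simp only [harmonicWeight, Hc_succ, Nat.choose_succ_self_right]
  push_cast
  field_simp
  ring

noncomputable def binomSumPoly (n : ℕ) : ℂ[X] :=
  ∑ k ∈ Icc 1 n, C ((-1) ^ (k - 1) / (k : ℂ) ^ 2) * choosePoly n k

noncomputable def harmonicSumPoly (n : ℕ) : ℂ[X] :=
  ∑ k ∈ range n, C ((-1) ^ k * harmonicWeight n k) * choosePoly k (k + 1)

lemma binomSumPoly_succ (n : ℕ) :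
    binomSumPoly (n + 1) = (binomSumPoly n).comp (X + 1) +
      C ((-1) ^ n / ((n : ℂ) + 1) ^ 2) * choosePoly (n + 1) (n + 1) := by
  rw [binomSumPoly, sum_Icc_succ_top (Nat.le_add_left 1 n), binomSumPoly, Polynomial.sum_comp]
  simp only [mul_comp, C_comp, choosePoly_comp_X_add_one, Nat.add_sub_cancel]
  push_cast
  rfl

lemma harmonicSumPoly_comp_X_add_one (n : ℕ) :
    (harmonicSumPoly n).comp (X + 1) =
      ∑ k ∈ range n, C ((-1) ^ k * harmonicWeight n k) * choosePoly (k + 1 : ℕ) (k + 1) := by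
  simp only [harmonicSumPoly, Polynomial.sum_comp, mul_comp, C_comp, choosePoly_comp_X_add_one]
  push_cast
  rfl

lemma harmonicSumPoly_succ (n : ℕ) :
    harmonicSumPoly (n + 1) = (harmonicSumPoly n).comp (X + 1) +
      C ((-1) ^ n / ((n : ℂ) + 1) ^ 2) * choosePoly (n + 1) (n + 1) -
        C (harmonicWeight (n + 1) 0) := by
  have hpascal (k : ℕ) :
      choosePoly k (k + 1) = choosePoly (k + 1 : ℕ) (k + 1) - choosePoly k k := by
    rw [Nat.cast_succ, choosePoly_succ_succ, add_sub_cancel_right]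
  have htelescope :
      ∑ k ∈ range n, C ((-1) ^ k * harmonicWeight (n + 1) k) * choosePoly (k + 1 : ℕ) (k + 1) -
        ∑ k ∈ range n,
          C ((-1) ^ (k + 1) * harmonicWeight (n + 1) (k + 1)) * choosePoly (k + 1 : ℕ) (k + 1) =
      ∑ k ∈ range n, C ((-1) ^ k * harmonicWeight n k) * choosePoly (k + 1 : ℕ) (k + 1) := by
    rw [← sum_sub_distrib]
    refine sum_congr rfl fun k hk => ?_
    rw [← sub_mul, ← C_sub, harmonicWeight_eq_add (mem_range.1 hk)]
    congr 2
    ring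
  rw [harmonicSumPoly_comp_X_add_one, harmonicSumPoly]
  simp only [hpascal, mul_sub, sum_sub_distrib]
  rw [sum_range_succ, sum_range_succ' _ n, harmonicWeight_succ_self, mul_one_div, choosePoly_zero]
  push_cast at htelescope ⊢
  rw [← htelescope, pow_zero, one_mul, mul_one]
  ring

lemma exists_binomSumPoly_eq_harmonicSumPoly_add_C (n : ℕ) :
    ∃ c : ℂ, binomSumPoly n = harmonicSumPoly n + C c := by
  induction n with
  | zero => exact ⟨0, by simp [binomSumPoly, harmonicSumPoly]⟩
  | succ n ih =>
    obtain ⟨c, hc⟩ := ih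
    refine ⟨c + harmonicWeight (n + 1) 0, ?_⟩
    rw [binomSumPoly_succ, harmonicSumPoly_succ, hc, add_comp, C_comp, C_add]
    ring

lemma sum_range_one_div_add_sub (s : ℂ) (k : ℕ) :
    ∑ i ∈ range k, 1 / (s + k - i) = ∑ j ∈ Icc 1 k, 1 / (s + j) := by
  refine sum_nbij' (k - ·) (k - ·) ?_ ?_ ?_ ?_ fun i hi => ?_
  all_goals try (intro i; simp only [mem_range, mem_Icc]; omega)
  rw [Nat.cast_sub (mem_range.1 hi).le, add_sub_assoc]

lemma eval_derivative_binomSumPoly (n : ℕ) (s : ℂ) (hs : ∀ j ∈ Icc 1 n, s + (j : ℂ) ≠ 0) :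
    (derivative (binomSumPoly n)).eval s =
      ∑ k ∈ Icc 1 n, genChoose (s + n) k * ((-1 : ℂ) ^ (k - 1) / (k : ℂ) ^ 2) *
        ∑ j ∈ range k, 1 / (s + n - j) := by
  simp only [binomSumPoly, derivative_sum, eval_finsetSum, derivative_C_mul, eval_mul, eval_C]
  refine sum_congr rfl fun k hk => ?_
  have hkn := (mem_Icc.1 hk).2
  rw [eval_derivative_choosePoly _ _ _ fun i hi => ?_]
  · ring
  · have := hs (n - i) (mem_Icc.2 ⟨by omega, by omega⟩)
    rwa [Nat.cast_sub (by omega), ← add_sub_assoc] at this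

lemma eval_derivative_harmonicSumPoly (n : ℕ) (s : ℂ) (hs : ∀ j ∈ Icc 1 n, s + (j : ℂ) ≠ 0) :
    (derivative (harmonicSumPoly n)).eval s =
      (∑ k ∈ range n, (-1 : ℂ) ^ k / ((k : ℂ) + 1) * genChoose (s + k) k *
          (Hc n - Hc k) / (((n : ℂ) - k) * (Nat.choose n k : ℂ))) +
        s * ∑ k ∈ range n, (-1 : ℂ) ^ k / ((k : ℂ) + 1) * genChoose (s + k) k *
          ((Hc n - Hc k) / (((n : ℂ) - k) * (Nat.choose n k : ℂ))) *
          ∑ j ∈ Icc 1 k, 1 / (s + j) := by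
  rw [harmonicSumPoly, derivative_sum, eval_finsetSum, mul_sum, ← sum_add_distrib]
  refine sum_congr rfl fun k hk => ?_
  have hkn := mem_range.1 hk
  rw [choosePoly_succ_self, derivative_C_mul, derivative_C_mul, derivative_mul, derivative_X,
    one_mul]
  simp only [eval_mul, eval_C, eval_add, eval_X]
  rw [eval_choosePoly, eval_derivative_choosePoly _ _ _ fun i hi => ?_, sum_range_one_div_add_sub,
    harmonicWeight]
  · ring
  · have := hs (k - i) (mem_Icc.2 ⟨by omega, by omega⟩)
    rwa [Nat.cast_sub (by omega), ← add_sub_assoc] at this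

theorem stmt_9_general (n : ℕ) (s : ℂ)
    (hs : ∀ j ∈ Finset.Icc 1 n, s + (j : ℂ) ≠ 0) :
    ∑ k ∈ Finset.Icc 1 n, genChoose (s + n) k * ((-1 : ℂ) ^ (k - 1) / (k : ℂ) ^ 2) *
        (∑ j ∈ Finset.range k, 1 / (s + n - j)) =
      (∑ k ∈ Finset.range n, (-1 : ℂ) ^ k / ((k : ℂ) + 1) * genChoose (s + k) k *
          (Hc n - Hc k) / (((n : ℂ) - k) * (Nat.choose n k : ℂ))) +
        s * ∑ k ∈ Finset.range n, (-1 : ℂ) ^ k / ((k : ℂ) + 1) * genChoose (s + k) k *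
          ((Hc n - Hc k) / (((n : ℂ) - k) * (Nat.choose n k : ℂ))) *
          ∑ j ∈ Finset.Icc 1 k, 1 / (s + j) := by
  obtain ⟨c, hc⟩ := exists_binomSumPoly_eq_harmonicSumPoly_add_C n
  rw [← eval_derivative_binomSumPoly n s hs, ← eval_derivative_harmonicSumPoly n s hs, hc,
    derivative_add, derivative_C, add_zero]

theorem stmt_9 (n : ℕ) (hn : 0 < n) (s : ℂ)
    (hs : ∀ j ∈ Finset.Icc 1 n, s + (j : ℂ) ≠ 0) :
    ∑ k ∈ Finset.Icc 1 n, genChoose (s + n) k * ((-1 : ℂ) ^ (k - 1) / (k : ℂ) ^ 2) *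
        (∑ j ∈ Finset.range k, 1 / (s + n - j)) =
      (∑ k ∈ Finset.range n, (-1 : ℂ) ^ k / ((k : ℂ) + 1) * genChoose (s + k) k *
          (Hc n - Hc k) / (((n : ℂ) - k) * (Nat.choose n k : ℂ))) +
        s * ∑ k ∈ Finset.range n, (-1 : ℂ) ^ k / ((k : ℂ) + 1) * genChoose (s + k) k *
          ((Hc n - Hc k) / (((n : ℂ) - k) * (Nat.choose n k : ℂ))) *
          ∑ j ∈ Finset.Icc 1 k, 1 / (s + j) :=
  stmt_9_general n s hs
end

section
/- For every positive integer n: ∑_{k=1}^{n} (-1)^k · H_{n−k} / (k · binom(n, k)) = (1 − (-1)^n)/(n+1)^2 − H_n/(n+1), as an identity of rational numbers. -/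
/-!
Absorption, `k * C(n+1, k) = (n+1) * C(n, k-1)`, turns the sum for `n + 1` into `-1/(n+1)` times
`∑_{k=0}^{n} (-1)^k H_{n-k} / C(n, k)`. That sum is evaluated by summation by parts against
`1/C(n, k) = (n+1)/(n+2) * (1/C(n+1, k) + 1/C(n+1, k+1))`, which makes alternating sums of
reciprocal binomials telescope. The differences `H_{n-k-1} - H_{n-k} = -1/(n-k)` are absorbed in
the same way, leaving `∑_{k=0}^{n} (-1)^k / C(n, k) = (n+1)/(n+2) * (1 + (-1)^n)`.
-/

/-- The `n`-th harmonic number as a rational number. -/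
def Hq (n : ℕ) : ℚ := ∑ i ∈ Finset.range n, 1 / (i + 1)

/-- The `n`-th generalized harmonic number of order 2 as a rational number. -/
def H2q (n : ℕ) : ℚ := ∑ i ∈ Finset.range n, 1 / ((i : ℚ) + 1) ^ 2

open Finset

theorem Nat.sub_mul_choose_succ_succ (n k : ℕ) :
    (n - k) * (n + 1).choose (k + 1) = (n + 1) * n.choose (k + 1) := by
  rw [mul_comm, ← Nat.add_sub_add_right n 1 k, ← Nat.choose_mul_succ_eq, mul_comm]

section Choose

variable {K : Type*} [Field K] [CharZero K]

theorem inv_choose_eq_mul_inv_choose_succ_add {n k : ℕ} (h : k ≤ n) :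
    (n.choose k : K)⁻¹ =
      (n + 1) / (n + 2) * (((n + 1).choose k : K)⁻¹ + ((n + 1).choose (k + 1) : K)⁻¹) := by
  have h₁ : ((n + 1 : ℕ) : K) * n.choose k = (n + 1).choose (k + 1) * (k + 1 : ℕ) := by
    exact_mod_cast Nat.add_one_mul_choose_eq n k
  have h₂ : ((n + 2 : ℕ) : K) * (n + 1).choose k = (n + 2).choose (k + 1) * (k + 1 : ℕ) := by
    exact_mod_cast Nat.add_one_mul_choose_eq (n + 1) k
  have h₃ : ((n + 2).choose (k + 1) : K) = (n + 1).choose k + (n + 1).choose (k + 1) := by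
    exact_mod_cast Nat.choose_succ_succ (n + 1) k
  have : (n.choose k : K) ≠ 0 := by exact_mod_cast (Nat.choose_pos h).ne'
  have : ((n + 1).choose k : K) ≠ 0 := by exact_mod_cast (Nat.choose_pos (by omega)).ne'
  have : ((n + 1).choose (k + 1) : K) ≠ 0 := by exact_mod_cast (Nat.choose_pos (by omega)).ne'
  have : (n + 2 : K) ≠ 0 := by exact_mod_cast (n + 1).succ_ne_zero
  push_cast at h₁ h₂
  field_simp
  linear_combination ((n + 1).choose (k + 1) : K) * h₂ + ((n + 1).choose (k + 1) * (k + 1) : K) * h₃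
    - ((n + 1).choose (k + 1) + (n + 1).choose k : K) * h₁

theorem sum_range_neg_one_pow_mul_div_choose (f : ℕ → K) (n : ℕ) :
    ∑ k ∈ range (n + 1), (-1) ^ k * f k / n.choose k =
      (n + 1) / (n + 2) * (f 0 + (-1) ^ n * f n +
        ∑ k ∈ range n, (-1) ^ (k + 1) * (f (k + 1) - f k) / (n + 1).choose (k + 1)) := by
  have split : ∀ k ∈ range (n + 1), (-1) ^ k * f k / n.choose k =
      (n + 1) / (n + 2) * ((-1) ^ k * f k / (n + 1).choose k
        - (-1) ^ (k + 1) * f k / (n + 1).choose (k + 1)) := by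
    intro k hk
    rw [div_eq_mul_inv, inv_choose_eq_mul_inv_choose_succ_add (Nat.lt_succ_iff.mp (mem_range.mp hk))]
    ring
  rw [sum_congr rfl split, ← mul_sum, sum_sub_distrib, sum_range_succ', sum_range_succ _ n]
  simp only [Nat.choose_self, Nat.choose_zero_right, Nat.cast_one, div_one, sub_div,
    mul_sub, sum_sub_distrib]
  ring

theorem sum_range_neg_one_pow_div_choose (n : ℕ) :
    ∑ k ∈ range (n + 1), (-1) ^ k / (n.choose k : K) = (n + 1) / (n + 2) * (1 + (-1) ^ n) := by
  simpa using sum_range_neg_one_pow_mul_div_choose (fun _ ↦ (1 : K)) n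

theorem sum_Icc_div_mul_choose (f : ℕ → K) (n : ℕ) :
    ∑ k ∈ Icc 1 (n + 1), f k / (k * (n + 1).choose k) =
      (∑ k ∈ range (n + 1), f (k + 1) / n.choose k) / (n + 1) := by
  rw [← Ico_add_one_right_eq_Icc, sum_Ico_eq_sum_range, sum_div]
  refine sum_congr rfl fun k _ ↦ ?_
  have h : ((1 + k : ℕ) : K) * (n + 1).choose (1 + k) = (n + 1) * n.choose k := by
    rw [add_comm 1 k]
    exact_mod_cast (by rw [Nat.add_one_mul_choose_eq, mul_comm] :
      (k + 1) * (n + 1).choose (k + 1) = (n + 1) * n.choose k)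
  rw [h, div_div, mul_comm, add_comm 1 k]

end Choose

@[simp]
theorem Hq_zero : Hq 0 = 0 := rfl

theorem Hq_succ (n : ℕ) : Hq (n + 1) = Hq n + 1 / (n + 1) := by
  simp [Hq, sum_range_succ]

theorem Hq_sub_eq_Hq_sub_succ_add {n k : ℕ} (h : k < n) :
    Hq (n - k) = Hq (n - (k + 1)) + 1 / (n - k : ℕ) := by
  rw [show n - k = n - (k + 1) + 1 by omega, Hq_succ, Nat.cast_succ]

theorem sum_range_neg_one_pow_mul_Hq_sub_div_choose (n : ℕ) :
    ∑ k ∈ range (n + 1), (-1) ^ k * Hq (n - k) / n.choose k =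
      ((n + 1) * Hq n + 1 - (n + 1) / (n + 2) * (1 + (-1) ^ n)) / (n + 2) := by
  have diff : ∀ k ∈ range n,
      (-1) ^ (k + 1) * (Hq (n - (k + 1)) - Hq (n - k)) / (n + 1).choose (k + 1) =
        -((-1) ^ (k + 1) / n.choose (k + 1) / (n + 1)) := by
    intro k hk
    have h : ((n - k : ℕ) : ℚ) * (n + 1).choose (k + 1) = (n + 1) * n.choose (k + 1) := by
      exact_mod_cast Nat.sub_mul_choose_succ_succ n k
    rw [Hq_sub_eq_Hq_sub_succ_add (mem_range.mp hk), sub_add_cancel_left, mul_neg, neg_div,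
      mul_one_div, div_div, h, div_div, mul_comm (n.choose (k + 1) : ℚ)]
  have tail : ∑ k ∈ range n, (-1) ^ (k + 1) / (n.choose (k + 1) : ℚ) =
      (n + 1) / (n + 2) * (1 + (-1) ^ n) - 1 := by
    rw [← sum_range_neg_one_pow_div_choose, sum_range_succ']
    simp
  rw [sum_range_neg_one_pow_mul_div_choose, sum_congr rfl diff, sum_neg_distrib, ← sum_div, tail]
  simp only [Nat.sub_zero, Nat.sub_self, Hq_zero, mul_zero, add_zero]
  field_simp
  ring

theorem stmt_18_general (n : ℕ) :
    ∑ k ∈ Finset.Icc 1 n, (-1 : ℚ) ^ k * Hq (n - k) / ((k : ℚ) * (Nat.choose n k : ℚ)) =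
      (1 - (-1 : ℚ) ^ n) / ((n : ℚ) + 1) ^ 2 - Hq n / ((n : ℚ) + 1) := by
  cases n with
  | zero => simp
  | succ n =>
    have shift : ∀ k, (-1 : ℚ) ^ (k + 1) * Hq (n + 1 - (k + 1)) = -((-1) ^ k * Hq (n - k)) := by
      intro k
      rw [Nat.add_sub_add_right, pow_succ]
      ring
    rw [sum_Icc_div_mul_choose]
    simp only [shift, neg_div, sum_neg_distrib, sum_range_neg_one_pow_mul_Hq_sub_div_choose, Hq_succ]
    push_cast
    field_simp
    ring

theorem stmt_18 (n : ℕ) (hn : 0 < n) :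
    ∑ k ∈ Finset.Icc 1 n, (-1 : ℚ) ^ k * Hq (n - k) / ((k : ℚ) * (Nat.choose n k : ℚ)) =
      (1 - (-1 : ℚ) ^ n) / ((n : ℚ) + 1) ^ 2 - Hq n / ((n : ℚ) + 1) :=
  stmt_18_general n
end
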